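/- Let K ⊂ ℝⁿ be a compact basic semi-algebraic set K = {x ∈ ℝⁿ : g_j(x) ≥ 0, j = 1,…,m} with N − ‖X‖² ∈ Q(g) for some N > 0, let μ be a finite Borel measure on K with moment sequence z = (z_α), and let y = (y_α) be a real sequence. If there exists a scalar κ such that 0 ≤ L_y(f² g_j) ≤ κ L_z(f² g_j) for every polynomial f ∈ ℝ[X] and every j = 0,1,…,m (with g_0 ≡ 1), then y has a representing Borel measure ν on K with ν ≪ μ and Radon–Nikodym derivative h satisfying 0 ≤ h ≤ κ μ-almost everywhere. -/

import Mathlib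

open MeasureTheory MvPolynomial

/-- The Riesz functional `L_y` of a sequence `y = (y_α)`:
`f = Σ_α f_α X^α ↦ Σ_α f_α y_α`. -/
noncomputable def rieszFunctional {n : ℕ} (y : (Fin n →₀ ℕ) → ℝ)
    (f : MvPolynomial (Fin n) ℝ) : ℝ :=
  ∑ α ∈ f.support, f.coeff α * y α

/-- Membership in the quadratic module `Q(g)` generated by `g_1,…,g_m`:
`p = u_0 + Σ_j u_j g_j` with each `u_j` a sum of squares. -/
def memQuadraticModule {n m : ℕ} (g : Fin m → MvPolynomial (Fin n) ℝ)
    (p : MvPolynomial (Fin n) ℝ) : Prop :=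
  ∃ (u₀ : MvPolynomial (Fin n) ℝ) (u : Fin m → MvPolynomial (Fin n) ℝ),
    IsSumSq u₀ ∧ (∀ j, IsSumSq (u j)) ∧ p = u₀ + ∑ j, u j * g j


/-!
By Cauchy–Schwarz, `L_y(p)² ≤ L_y(1) L_y(p²) ≤ κ L_y(1) ‖p‖²` with `‖·‖` the norm of `L²(μ)`,
so `L_y` is a bounded functional of `p ∈ L²(μ)` and is represented (Hahn–Banach, then Riesz) by
some `h ∈ L²(μ)`: `L_y(p) = ∫ p h dμ`. The hypotheses then read `∫ p² h dμ ≥ 0` and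
`∫ p² (κ - h) dμ ≥ 0` for every polynomial `p`. As `μ` lives on the compact set `K`,
Stone–Weierstrass upgrades `p²` to `f²` for every continuous `f`, and the density of continuous
functions in `L²(μ)` turns this into `0 ≤ h ≤ κ` almost everywhere. Then `ν = h μ`.
-/

open Filter Topology

theorem exists_inner_eq_of_abs_le_mul_norm {V H : Type*} [AddCommGroup V] [Module ℝ V]
    [NormedAddCommGroup H] [InnerProductSpace ℝ H] [CompleteSpace H]
    (T : V →ₗ[ℝ] H) (L : V →ₗ[ℝ] ℝ) (C : ℝ) (hL : ∀ v, |L v| ≤ C * ‖T v‖) :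
    ∃ u : H, ∀ v, L v = inner ℝ u (T v) := by
  have hker : LinearMap.ker T ≤ LinearMap.ker L := fun v hv => by
    rw [LinearMap.mem_ker] at hv ⊢
    simpa [hv] using hL v
  let φ : LinearMap.range T →ₗ[ℝ] ℝ :=
    (LinearMap.ker T).liftQ L hker ∘ₗ T.quotKerEquivRange.symm.toLinearMap
  have hφ (v : V) : φ ⟨T v, LinearMap.mem_range_self T v⟩ = L v := by
    simp [φ, LinearMap.quotKerEquivRange_symm_apply_image]
  have hφC : ∀ x, ‖φ x‖ ≤ C * ‖x‖ := by
    rintro ⟨-, v, rfl⟩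
    simpa [hφ] using hL v
  obtain ⟨Φ, hΦ, -⟩ := exists_extension_norm_eq _ (φ.mkContinuous C hφC)
  refine ⟨(InnerProductSpace.toDual ℝ H).symm Φ, fun v => ?_⟩
  rw [InnerProductSpace.toDual_symm_apply, hΦ ⟨T v, LinearMap.mem_range_self T v⟩,
    LinearMap.mkContinuous_apply, hφ]

theorem LinearMap.sq_apply_mul_le_of_forall_sq_nonneg {A : Type*} [CommRing A] [Algebra ℝ A]
    (L : A →ₗ[ℝ] ℝ) (hL : ∀ a, 0 ≤ L (a ^ 2)) (a b : A) :
    L (a * b) ^ 2 ≤ L (a ^ 2) * L (b ^ 2) := by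
  have hquad : ∀ t : ℝ, 0 ≤ L (b ^ 2) * (t * t) + 2 * L (a * b) * t + L (a ^ 2) := by
    intro t
    have hexp : (a + t • b) ^ 2 = a ^ 2 + (2 * t) • (a * b) + (t * t) • b ^ 2 := by
      simp only [Algebra.smul_def, map_mul, map_ofNat]
      ring
    have := hL (a + t • b)
    rw [hexp, map_add, map_add, map_smul, map_smul, smul_eq_mul, smul_eq_mul] at this
    linarith
  have := discrim_le_zero hquad
  rw [discrim] at this
  linarith

theorem ae_nonneg_of_forall_integral_sq_mul_nonneg {α : Type*} [TopologicalSpace α]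
    [NormalSpace α] [MeasurableSpace α] [BorelSpace α] {μ : Measure α} [IsFiniteMeasure μ]
    [μ.WeaklyRegular] {w : α → ℝ} (hw : MemLp w 2 μ)
    (h : ∀ f : α → ℝ, Continuous f → 0 ≤ ∫ x, f x ^ 2 * w x ∂μ) : 0 ≤ᵐ[μ] w := by
  -- `u ↦ ⟪u⁺, w⟫` is continuous on `L²(μ)` and nonnegative on the dense set of bounded continuous
  -- functions, whose positive parts are squares of continuous functions.
  have hpos : ∀ u : Lp ℝ 2 μ, 0 ≤ inner ℝ (Lp.posPart u) (hw.toLp w) := by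
    intro u
    refine (BoundedContinuousFunction.toLp_denseRange (p := 2) ℝ μ ℝ ENNReal.ofNat_ne_top
      ).induction_on u (isClosed_le continuous_const
        ((Lp.continuous_posPart (p := 2)).inner continuous_const)) fun b => ?_
    convert h (fun x => Real.sqrt (max (b x) 0))
      (Real.continuous_sqrt.comp (b.continuous.max continuous_const)) using 1
    rw [L2.inner_def]
    refine integral_congr_ae ?_
    filter_upwards [Lp.coeFn_posPart (BoundedContinuousFunction.toLp 2 μ ℝ b),
      BoundedContinuousFunction.coeFn_toLp 2 μ ℝ b, hw.coeFn_toLp] with x hpx hbx hwx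
    rw [Real.sq_sqrt (le_max_right _ _), RCLike.inner_apply, conj_trivial, hpx, hbx, hwx, mul_comm]
  refine ae_nonneg_of_forall_setIntegral_nonneg (hw.integrable one_le_two) fun s hs hμs => ?_
  set χ : Lp ℝ 2 μ := indicatorConstLp 2 hs hμs.ne 1
  have hχ : Lp.posPart χ = χ := by
    refine Lp.ext ?_
    filter_upwards [Lp.coeFn_posPart χ, indicatorConstLp_coeFn (p := 2) (hs := hs)
      (hμs := hμs.ne) (c := (1 : ℝ))] with x hpx hx
    rw [hpx, hx]
    exact max_eq_left (Set.indicator_nonneg (fun _ _ => zero_le_one) x)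
  have := hpos χ
  rwa [hχ, L2.inner_indicatorConstLp_one,
    setIntegral_congr_ae hs (hw.coeFn_toLp.mono fun x hx _ => hx)] at this

theorem Continuous.memLp_of_ae_mem_isCompact {X : Type*} [TopologicalSpace X]
    [MeasurableSpace X] [OpensMeasurableSpace X] {μ : Measure X} [IsFiniteMeasure μ]
    {K : Set X} (hK : IsCompact K) (hμK : ∀ᵐ x ∂μ, x ∈ K) {f : X → ℝ} (hf : Continuous f)
    (p : ENNReal) : MemLp f p μ := by
  obtain ⟨C, hC⟩ := hK.exists_bound_of_continuousOn hf.continuousOn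
  exact MemLp.of_bound hf.aestronglyMeasurable C (hμK.mono hC)

namespace MvPolynomial

theorem exists_forall_abs_eval_sub_lt {σ : Type*} {K : Set (σ → ℝ)}
    (hK : IsCompact K) {f : (σ → ℝ) → ℝ} (hf : Continuous f) {ε : ℝ} (hε : 0 < ε) :
    ∃ p : MvPolynomial σ ℝ, ∀ x ∈ K, |eval x p - f x| < ε := by
  have : CompactSpace K := isCompact_iff_compactSpace.mp hK
  let Ψ : MvPolynomial σ ℝ →ₐ[ℝ] C(K, ℝ) :=
    aeval fun i => ⟨fun x => (x : σ → ℝ) i, (continuous_apply i).comp continuous_subtype_val⟩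
  have hΨ (p : MvPolynomial σ ℝ) (x : K) : Ψ p x = eval (x : σ → ℝ) p := by
    rw [← ContinuousMap.evalAlgHom_apply (S := ℝ), comp_aeval_apply]
    rfl
  have hsep : Ψ.range.SeparatesPoints := by
    rintro x y hxy
    obtain ⟨i, hi⟩ : ∃ i, (x : σ → ℝ) i ≠ (y : σ → ℝ) i := by
      by_contra! h
      exact hxy (Subtype.ext (_root_.funext h))
    exact ⟨_, ⟨Ψ (X i), ⟨X i, rfl⟩, rfl⟩, by simpa [hΨ] using hi⟩
  obtain ⟨⟨-, p, rfl⟩, hp⟩ :=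
    ContinuousMap.exists_mem_subalgebra_near_continuous_of_separatesPoints Ψ.range hsep
      (fun x : K => f x) (by fun_prop) ε hε
  exact ⟨p, fun x hx => by simpa [hΨ] using hp ⟨x, hx⟩⟩

section

variable {σ : Type*} [Countable σ] {K : Set (σ → ℝ)} {μ : Measure (σ → ℝ)}

theorem integral_sq_mul_nonneg_of_forall_eval_sq (hK : IsCompact K) (hμK : ∀ᵐ x ∂μ, x ∈ K)
    {w : (σ → ℝ) → ℝ} (hw : Integrable w μ)
    (h : ∀ p : MvPolynomial σ ℝ, 0 ≤ ∫ x, eval x p ^ 2 * w x ∂μ)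
    {f : (σ → ℝ) → ℝ} (hf : Continuous f) : 0 ≤ ∫ x, f x ^ 2 * w x ∂μ := by
  obtain ⟨M, hM⟩ := hK.exists_bound_of_continuousOn hf.continuousOn
  choose p hp using fun k : ℕ =>
    exists_forall_abs_eval_sub_lt hK hf (Nat.one_div_pos_of_nat (n := k))
  have hbound (k : ℕ) (x : σ → ℝ) (hx : x ∈ K) : |eval x (p k)| ≤ M + 1 := by
    have hk : 1 / ((k : ℝ) + 1) ≤ 1 := div_le_one_of_le₀ (by simp) (by positivity)
    have hfx : |f x| ≤ M := hM x hx
    linarith [hp k x hx, abs_sub_abs_le_abs_sub (eval x (p k)) (f x)]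
  have hlim : Tendsto (fun k => ∫ x, eval x (p k) ^ 2 * w x ∂μ) atTop
      (𝓝 (∫ x, f x ^ 2 * w x ∂μ)) := by
    refine tendsto_integral_of_dominated_convergence (fun x => (M + 1) ^ 2 * |w x|)
      (fun k => ((continuous_eval _).pow 2).aestronglyMeasurable.mul hw.aestronglyMeasurable)
      (hw.abs.const_mul _) (fun k => ?_) ?_
    · filter_upwards [hμK] with x hx
      rw [norm_mul, norm_pow, Real.norm_eq_abs, Real.norm_eq_abs]
      gcongr
      exact hbound k x hx
    · filter_upwards [hμK] with x hx
      have : Tendsto (fun k => eval x (p k)) atTop (𝓝 (f x)) :=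
        tendsto_iff_dist_tendsto_zero.mpr <| squeeze_zero (fun _ => dist_nonneg)
          (fun k => (hp k x hx).le) tendsto_one_div_add_atTop_nhds_zero_nat
      exact (this.pow 2).mul_const _
  exact ge_of_tendsto' hlim fun k => h (p k)

theorem ae_nonneg_of_forall_integral_eval_sq_mul_nonneg [IsFiniteMeasure μ] (hK : IsCompact K)
    (hμK : ∀ᵐ x ∂μ, x ∈ K) {w : (σ → ℝ) → ℝ} (hw : MemLp w 2 μ)
    (h : ∀ p : MvPolynomial σ ℝ, 0 ≤ ∫ x, eval x p ^ 2 * w x ∂μ) : 0 ≤ᵐ[μ] w :=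
  ae_nonneg_of_forall_integral_sq_mul_nonneg hw fun _ hf =>
    integral_sq_mul_nonneg_of_forall_eval_sq hK hμK (hw.integrable one_le_two) h hf

theorem ae_le_of_forall_integral_eval_sq_mul_le [IsFiniteMeasure μ] (hK : IsCompact K)
    (hμK : ∀ᵐ x ∂μ, x ∈ K) {w : (σ → ℝ) → ℝ} (hw : MemLp w 2 μ) (c : ℝ)
    (h : ∀ p : MvPolynomial σ ℝ, ∫ x, eval x p ^ 2 * w x ∂μ ≤ c * ∫ x, eval x p ^ 2 ∂μ) :
    ∀ᵐ x ∂μ, w x ≤ c := by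
  refine (ae_nonneg_of_forall_integral_eval_sq_mul_nonneg hK hμK ((memLp_const c).sub hw)
    fun p => ?_).mono fun x hx => sub_nonneg.mp hx
  have hp2 : MemLp (fun x => eval x p ^ 2) 2 μ :=
    ((continuous_eval p).pow 2).memLp_of_ae_mem_isCompact hK hμK 2
  have hp2w : Integrable (fun x => eval x p ^ 2 * w x) μ := hp2.integrable_mul hw
  have hsplit : ∫ x, eval x p ^ 2 * (c - w x) ∂μ
      = c * ∫ x, eval x p ^ 2 ∂μ - ∫ x, eval x p ^ 2 * w x ∂μ := by
    rw [← integral_const_mul, ← integral_sub ((hp2.integrable one_le_two).const_mul c) hp2w]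
    congr 1 with x
    ring
  exact hsplit ▸ sub_nonneg.mpr (h p)

theorem memLp_eval_of_ae_mem_isCompact [IsFiniteMeasure μ] (hK : IsCompact K)
    (hμK : ∀ᵐ x ∂μ, x ∈ K) (p : MvPolynomial σ ℝ) (q : ENNReal) :
    MemLp (fun x => eval x p) q μ :=
  (continuous_eval p).memLp_of_ae_mem_isCompact hK hμK q

noncomputable def toLp [IsFiniteMeasure μ] (hK : IsCompact K) (hμK : ∀ᵐ x ∂μ, x ∈ K) :
    MvPolynomial σ ℝ →ₗ[ℝ] Lp ℝ 2 μ where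
  toFun p := (memLp_eval_of_ae_mem_isCompact hK hμK p 2).toLp _
  map_add' p q := by
    simp_rw [map_add]
    exact MemLp.toLp_add _ _
  map_smul' c p := by
    simp_rw [smul_eval, ← smul_eq_mul]
    exact MemLp.toLp_const_smul c (memLp_eval_of_ae_mem_isCompact hK hμK p 2)

theorem coeFn_toLp [IsFiniteMeasure μ] (hK : IsCompact K) (hμK : ∀ᵐ x ∂μ, x ∈ K)
    (p : MvPolynomial σ ℝ) : toLp hK hμK p =ᵐ[μ] fun x => eval x p :=
  (memLp_eval_of_ae_mem_isCompact hK hμK p 2).coeFn_toLp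

theorem inner_toLp [IsFiniteMeasure μ] (hK : IsCompact K) (hμK : ∀ᵐ x ∂μ, x ∈ K)
    (u : Lp ℝ 2 μ) (p : MvPolynomial σ ℝ) :
    inner ℝ u (toLp hK hμK p) = ∫ x, eval x p * u x ∂μ := by
  rw [L2.inner_def]
  refine integral_congr_ae ?_
  filter_upwards [coeFn_toLp hK hμK p] with x hx
  rw [hx, RCLike.inner_apply, conj_trivial]

theorem norm_toLp_sq [IsFiniteMeasure μ] (hK : IsCompact K) (hμK : ∀ᵐ x ∂μ, x ∈ K)
    (p : MvPolynomial σ ℝ) : ‖toLp hK hμK p‖ ^ 2 = ∫ x, eval x p ^ 2 ∂μ := by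
  rw [← real_inner_self_eq_norm_sq, inner_toLp]
  refine integral_congr_ae ?_
  filter_upwards [coeFn_toLp hK hμK p] with x hx
  rw [hx, sq]

end

end MvPolynomial

section Riesz

variable {n : ℕ}

noncomputable def rieszLinearMap (y : (Fin n →₀ ℕ) → ℝ) : MvPolynomial (Fin n) ℝ →ₗ[ℝ] ℝ :=
  Finsupp.linearCombination ℝ y ∘ₗ (AddMonoidAlgebra.coeffLinearEquiv ℝ).toLinearMap

theorem rieszLinearMap_apply (y : (Fin n →₀ ℕ) → ℝ) (f : MvPolynomial (Fin n) ℝ) :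
    rieszLinearMap y f = rieszFunctional y f :=
  rfl

theorem rieszFunctional_monomial_one (y : (Fin n →₀ ℕ) → ℝ) (α : Fin n →₀ ℕ) :
    rieszFunctional y (monomial α 1) = y α := by
  simp [rieszFunctional, support_monomial, coeff_monomial]

theorem rieszFunctional_eq_integral {K : Set (Fin n → ℝ)} (hK : IsCompact K)
    {μ : Measure (Fin n → ℝ)} [IsFiniteMeasure μ] (hμK : ∀ᵐ x ∂μ, x ∈ K)
    {z : (Fin n →₀ ℕ) → ℝ} (hz : ∀ α : Fin n →₀ ℕ, z α = ∫ x, ∏ i, x i ^ α i ∂μ)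
    (p : MvPolynomial (Fin n) ℝ) :
    rieszFunctional z p = ∫ x, eval x p ∂μ := by
  have hint (α : Fin n →₀ ℕ) : Integrable (fun x : Fin n → ℝ => ∏ i, x i ^ α i) μ :=
    (Continuous.memLp_of_ae_mem_isCompact hK hμK (by fun_prop) 1).integrable le_rfl
  simp_rw [rieszFunctional, hz, eval_eq', ← integral_const_mul]
  exact (integral_finsetSum _ fun α _ => (hint α).const_mul _).symm

theorem exists_Lp_rieszFunctional_eq_integral {K : Set (Fin n → ℝ)} (hK : IsCompact K)
    {μ : Measure (Fin n → ℝ)} [IsFiniteMeasure μ] (hμK : ∀ᵐ x ∂μ, x ∈ K)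
    {z : (Fin n →₀ ℕ) → ℝ} (hz : ∀ α : Fin n →₀ ℕ, z α = ∫ x, ∏ i, x i ^ α i ∂μ)
    {y : (Fin n →₀ ℕ) → ℝ} {κ : ℝ} (hy : ∀ f, 0 ≤ rieszFunctional y (f ^ 2))
    (hyz : ∀ f, rieszFunctional y (f ^ 2) ≤ κ * rieszFunctional z (f ^ 2)) :
    ∃ u : Lp ℝ 2 μ, ∀ p, rieszFunctional y p = ∫ x, eval x p * u x ∂μ := by
  set T := toLp hK hμK
  have hL1 : 0 ≤ rieszFunctional y 1 := by simpa using hy 1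
  have hbound (p : MvPolynomial (Fin n) ℝ) :
      |rieszFunctional y p| ≤ √(rieszFunctional y 1 * κ) * ‖T p‖ := by
    have hCS : rieszFunctional y p ^ 2 ≤ rieszFunctional y (p ^ 2) * rieszFunctional y 1 := by
      simpa [rieszLinearMap_apply] using
        (rieszLinearMap y).sq_apply_mul_le_of_forall_sq_nonneg hy p 1
    have hnorm : rieszFunctional z (p ^ 2) = ‖T p‖ ^ 2 := by
      rw [norm_toLp_sq, rieszFunctional_eq_integral hK hμK hz]
      simp_rw [eval_pow]
    have hsq : rieszFunctional y p ^ 2 ≤ rieszFunctional y 1 * κ * ‖T p‖ ^ 2 :=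
      calc rieszFunctional y p ^ 2 ≤ rieszFunctional y (p ^ 2) * rieszFunctional y 1 := hCS
        _ ≤ κ * ‖T p‖ ^ 2 * rieszFunctional y 1 := by
          gcongr
          exact hnorm ▸ hyz p
        _ = rieszFunctional y 1 * κ * ‖T p‖ ^ 2 := by ring
    rw [← Real.sqrt_sq_eq_abs, ← Real.sqrt_sq (norm_nonneg (T p)),
      ← Real.sqrt_mul' _ (sq_nonneg _)]
    exact Real.sqrt_le_sqrt hsq
  obtain ⟨u, hu⟩ := exists_inner_eq_of_abs_le_mul_norm T (rieszLinearMap y) _ hbound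
  exact ⟨u, fun p => by rw [← rieszLinearMap_apply, hu, inner_toLp]⟩

end Riesz

theorem integral_withDensity_ofReal {X : Type*} [MeasurableSpace X] {μ : Measure X}
    {h : X → ℝ} (hh : Measurable h) (h0 : 0 ≤ᵐ[μ] h) (g : X → ℝ) :
    ∫ x, g x ∂μ.withDensity (fun x => ENNReal.ofReal (h x)) = ∫ x, g x * h x ∂μ := by
  rw [integral_withDensity_eq_integral_toReal_smul hh.ennreal_ofReal
    (ae_of_all _ fun _ => ENNReal.ofReal_lt_top)]
  refine integral_congr_ae ?_
  filter_upwards [h0] with x hx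
  rw [ENNReal.toReal_ofReal hx, smul_eq_mul, mul_comm]

theorem representing_bounded_density_of_moment_ineq_putinar_general
    {n : ℕ}
    (K : Set (Fin n → ℝ))
    (hK : IsCompact K)
    (μ : Measure (Fin n → ℝ)) [IsFiniteMeasure μ] (hμK : μ Kᶜ = 0)
    (z : (Fin n →₀ ℕ) → ℝ)
    (hz : ∀ α : Fin n →₀ ℕ, z α = ∫ x, ∏ i, x i ^ α i ∂μ)
    (y : (Fin n →₀ ℕ) → ℝ) (κ : ℝ)
    (hy0 : ∀ f : MvPolynomial (Fin n) ℝ,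
        0 ≤ rieszFunctional y (f ^ 2) ∧
        rieszFunctional y (f ^ 2) ≤ κ * rieszFunctional z (f ^ 2)) :
    ∃ ν : Measure (Fin n → ℝ), ν Kᶜ = 0 ∧
      (∀ α : Fin n →₀ ℕ, y α = ∫ x, ∏ i, x i ^ α i ∂ν) ∧ ν ≪ μ ∧
      ∃ h : (Fin n → ℝ) → ℝ, Measurable h ∧
        ν = μ.withDensity (fun x => ENNReal.ofReal (h x)) ∧
        ∀ᵐ x ∂μ, 0 ≤ h x ∧ h x ≤ κ := by
  have hμK' : ∀ᵐ x ∂μ, x ∈ K := ae_iff.mpr hμK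
  obtain ⟨u, hu⟩ := exists_Lp_rieszFunctional_eq_integral hK hμK' hz (fun f => (hy0 f).1)
    (fun f => (hy0 f).2)
  have hu_sq (f : MvPolynomial (Fin n) ℝ) :
      ∫ x, eval x f ^ 2 * u x ∂μ = rieszFunctional y (f ^ 2) := by
    simp_rw [hu, eval_pow]
  have hu_nonneg : 0 ≤ᵐ[μ] u :=
    ae_nonneg_of_forall_integral_eval_sq_mul_nonneg hK hμK' (Lp.memLp u) fun f =>
      hu_sq f ▸ (hy0 f).1
  have hu_le : ∀ᵐ x ∂μ, u x ≤ κ :=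
    ae_le_of_forall_integral_eval_sq_mul_le hK hμK' (Lp.memLp u) κ fun f => by
      simpa only [hu_sq, rieszFunctional_eq_integral hK hμK' hz, eval_pow] using (hy0 f).2
  have hu_meas : Measurable u := (Lp.stronglyMeasurable u).measurable
  refine ⟨μ.withDensity fun x => ENNReal.ofReal (u x), withDensity_absolutelyContinuous _ _ hμK,
    fun α => ?_, withDensity_absolutelyContinuous _ _, u, hu_meas, rfl, hu_nonneg.and hu_le⟩
  rw [integral_withDensity_ofReal hu_meas hu_nonneg, ← rieszFunctional_monomial_one y α, hu]
  simp_rw [eval_monomial, one_mul, Finsupp.prod_pow]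

/-- ("If" part of Theorem 3.1(b), Lasserre.)
Let `K ⊂ ℝⁿ` be a compact basic semi-algebraic set `K = {x : g_j(x) ≥ 0}` with
`N - ‖X‖² ∈ Q(g)` for some `N > 0`, let `μ` be a finite Borel measure on `K` with moment
sequence `z`, and let `y` be a real sequence.  If there is a scalar `κ` with
`0 ≤ L_y(f² g_j) ≤ κ L_z(f² g_j)` for all polynomials `f` and all `j = 0,1,…,m`
(with `g_0 ≡ 1`), then `y` has a representing Borel measure `ν` on `K` with `ν ≪ μ` and
Radon–Nikodym density `h` satisfying `0 ≤ h ≤ κ` `μ`-a.e. -/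
theorem representing_bounded_density_of_moment_ineq_putinar
    {n m : ℕ} (g : Fin m → MvPolynomial (Fin n) ℝ)
    (K : Set (Fin n → ℝ))
    (hKdef : K = {x : Fin n → ℝ | ∀ j : Fin m, 0 ≤ eval x (g j)})
    (hK : IsCompact K)
    (N : ℝ) (hN : 0 < N)
    (harch : memQuadraticModule g (C N - ∑ i, (X i : MvPolynomial (Fin n) ℝ) ^ 2))
    (μ : Measure (Fin n → ℝ)) [IsFiniteMeasure μ] (hμK : μ Kᶜ = 0)
    (z : (Fin n →₀ ℕ) → ℝ)
    (hz : ∀ α : Fin n →₀ ℕ, z α = ∫ x, ∏ i, x i ^ α i ∂μ)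
    (y : (Fin n →₀ ℕ) → ℝ) (κ : ℝ)
    (hy0 : ∀ f : MvPolynomial (Fin n) ℝ,
        0 ≤ rieszFunctional y (f ^ 2) ∧
        rieszFunctional y (f ^ 2) ≤ κ * rieszFunctional z (f ^ 2))
    (hyj : ∀ (j : Fin m) (f : MvPolynomial (Fin n) ℝ),
        0 ≤ rieszFunctional y (f ^ 2 * g j) ∧
        rieszFunctional y (f ^ 2 * g j) ≤ κ * rieszFunctional z (f ^ 2 * g j)) :
    ∃ ν : Measure (Fin n → ℝ), ν Kᶜ = 0 ∧
      (∀ α : Fin n →₀ ℕ, y α = ∫ x, ∏ i, x i ^ α i ∂ν) ∧ ν ≪ μ ∧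
      ∃ h : (Fin n → ℝ) → ℝ, Measurable h ∧
        ν = μ.withDensity (fun x => ENNReal.ofReal (h x)) ∧
        ∀ᵐ x ∂μ, 0 ≤ h x ∧ h x ≤ κ :=
  representing_bounded_density_of_moment_ineq_putinar_general K hK μ hμK z hz y κ hy0
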